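/- arXiv:2511.11497 — 6 statements merged into one kernel-verified Lean document; each statement's English description precedes it below -/
import Mathlib

section
/- (Bayesian backward method.) (i) The total mass of the unnormalized posterior equals the backward integral at time 0: ∫_{E^{T+1}} U(x₀,…,x_T) dμ^{⊗(T+1)} = ∫_E b₀(x₀)·u₀(x₀) μ(dx₀). (ii) For every point (x₀,…,x_T) ∈ E^{T+1} such that 0 < b_{t−1}(x_{t−1}) < ∞ for all 1 ≤ t ≤ T, the unnormalized posterior admits the forward Markov factorization U(x₀,…,x_T) = b₀(x₀)·u₀(x₀) · ∏_{t=1}^{T} [ b_t(x_t)·u_t(x_{t−1},x_t) / b_{t−1}(x_{t−1}) ]. (iii) For every 1 ≤ t ≤ T and every x ∈ E with 0 < b_{t−1}(x) < ∞, the forward factor is a probability density: ∫_E b_t(y)·u_t(x,y) / b_{t−1}(x) μ(dy) = 1. -/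
/-!
Integrating the last coordinate `x_n` out of `U(x₀, …, x_n) · b_n(x_n)` replaces
`u_n(x_{n-1}, ·) · b_n` by `b_{n-1}(x_{n-1})`, by the backward recursion; descending from
`n = T`, where `b_T = 1`, down to `n = 0` gives the total mass (i). The forward factorization (ii)
is a telescoping product of the ratios `b_t / b_{t-1}`, and (iii) is the backward recursion
divided by `b_{t-1}(x)`.
-/

open MeasureTheory ENNReal
open scoped ENNReal BigOperators
open Fin.NatCast

theorem ENNReal.mul_prod_Icc_div_telescope (c d : ℕ → ℝ≥0∞) (T : ℕ)
    (h0 : ∀ t < T, c t ≠ 0) (htop : ∀ t < T, c t ≠ ∞) :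
    c 0 * ∏ t ∈ Finset.Icc 1 T, c t * d t / c (t - 1) =
      c T * ∏ t ∈ Finset.Icc 1 T, d t := by
  induction T with
  | zero => simp
  | succ n ih =>
    rw [Finset.prod_Icc_succ_top (Nat.le_add_left 1 n),
      Finset.prod_Icc_succ_top (Nat.le_add_left 1 n),
      Nat.add_sub_cancel, ← mul_assoc,
      ih (fun t ht => h0 t (by omega)) (fun t ht => htop t (by omega))]
    calc c n * (∏ t ∈ Finset.Icc 1 n, d t) * (c (n + 1) * d (n + 1) / c n)
        = c n * (c (n + 1) * d (n + 1) / c n) * ∏ t ∈ Finset.Icc 1 n, d t := by ring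
      _ = c (n + 1) * ((∏ t ∈ Finset.Icc 1 n, d t) * d (n + 1)) := by
        rw [ENNReal.mul_div_cancel (h0 n n.lt_succ_self) (htop n n.lt_succ_self)]; ring

theorem Fin.snoc_natCast_of_le {α : Type*} {n t : ℕ} (x : Fin (n + 1) → α) (y : α)
    (ht : t ≤ n) :
    (Fin.snoc x y : Fin (n + 2) → α) t = x t := by
  have : (t : Fin (n + 2)) = Fin.castSucc (t : Fin (n + 1)) := by
    ext
    simp [Nat.mod_eq_of_lt (show t < n + 1 by omega), Nat.mod_eq_of_lt (show t < n + 2 by omega)]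
  rw [this, Fin.snoc_castSucc]

theorem MeasureTheory.lintegral_pi_fin_succ_snoc {E : Type*} [MeasurableSpace E]
    (μ : Measure E) [SigmaFinite μ] {n : ℕ} {f : (Fin (n + 1) → E) → ℝ≥0∞} (hf : Measurable f) :
    ∫⁻ x, f x ∂Measure.pi (fun _ => μ) =
      ∫⁻ x, ∫⁻ y, f (Fin.snoc x y) ∂μ ∂Measure.pi (fun _ : Fin n => μ) := by
  have e := (measurePreserving_piFinSuccAbove (fun _ : Fin (n + 1) => μ) (Fin.last n)).symm
  rw [← e.lintegral_comp hf]
  refine (lintegral_prod_symm' _ (hf.comp e.measurable)).trans ?_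
  simp [MeasurableEquiv.piFinSuccAbove_symm_apply, Fin.snocEquiv]

section BackwardMethod

variable {E : Type*} {u₀ : E → ℝ≥0∞} {u : ℕ → E × E → ℝ≥0∞} {b : ℕ → E → ℝ≥0∞}

variable (u₀ u) in
noncomputable def pathDensity (n : ℕ) (x : Fin (n + 1) → E) : ℝ≥0∞ :=
  u₀ (x 0) * ∏ t ∈ Finset.Icc 1 n, u t (x ↑(t - 1), x ↑t)

theorem pathDensity_snoc (n : ℕ) (x : Fin (n + 1) → E) (y : E) :
    pathDensity u₀ u (n + 1) (Fin.snoc x y) =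
      pathDensity u₀ u n x * u (n + 1) (x (Fin.last n), y) := by
  have hprefix : ∏ t ∈ Finset.Icc 1 n, u t ((Fin.snoc x y : Fin (n + 2) → E) ↑(t - 1),
      (Fin.snoc x y : Fin (n + 2) → E) ↑t) = ∏ t ∈ Finset.Icc 1 n, u t (x ↑(t - 1), x ↑t) :=
    Finset.prod_congr rfl fun t ht => by
      rw [Finset.mem_Icc] at ht
      rw [Fin.snoc_natCast_of_le x y (by omega), Fin.snoc_natCast_of_le x y ht.2]
  have hlast : (Fin.snoc x y : Fin (n + 2) → E) ↑(n + 1) = y := by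
    rw [Fin.natCast_eq_last, Fin.snoc_last]
  rw [pathDensity, pathDensity, Finset.prod_Icc_succ_top (Nat.le_add_left 1 n), hprefix, hlast,
    Nat.add_sub_cancel, Fin.snoc_natCast_of_le x y le_rfl, Fin.natCast_eq_last,
    ← Fin.castSucc_zero, Fin.snoc_castSucc, mul_assoc]

variable [MeasurableSpace E] {μ : Measure E}

theorem measurable_of_backward_rec [SFinite μ] {T : ℕ} (hu : ∀ t, Measurable (u t))
    (hbT : Measurable (b T))
    (hrec : ∀ t < T, ∀ x, b t x = ∫⁻ y, b (t + 1) y * u (t + 1) (x, y) ∂μ) {t : ℕ}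
    (ht : t ≤ T) : Measurable (b t) := by
  refine Nat.decreasingInduction (motive := fun t _ => Measurable (b t))
    (fun k hk ih => ?_) hbT ht
  rw [funext (hrec k hk)]
  exact (ih.comp measurable_snd).mul (hu (k + 1)) |>.lintegral_prod_right'

theorem measurable_pathDensity (hu₀ : Measurable u₀) (hu : ∀ t, Measurable (u t)) (n : ℕ) :
    Measurable (pathDensity u₀ u n) := by
  unfold pathDensity; fun_prop

theorem lintegral_pathDensity_mul_backward [SigmaFinite μ] (hu₀ : Measurable u₀)
    (hu : ∀ t, Measurable (u t)) {n : ℕ} (hb : ∀ t ≤ n, Measurable (b t))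
    (hrec : ∀ t < n, ∀ x, b t x = ∫⁻ y, b (t + 1) y * u (t + 1) (x, y) ∂μ) :
    ∫⁻ x, pathDensity u₀ u n x * b n (x (Fin.last n)) ∂Measure.pi (fun _ => μ) =
      ∫⁻ x₀, b 0 x₀ * u₀ x₀ ∂μ := by
  induction n with
  | zero =>
    rw [← (measurePreserving_funUnique μ (Fin 1)).lintegral_comp_emb
      (MeasurableEquiv.measurableEmbedding _)]
    refine lintegral_congr fun x => ?_
    simp [pathDensity, mul_comm]
  | succ n ih =>
    have hmeas : Measurable fun x : Fin (n + 2) → E =>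
        pathDensity u₀ u (n + 1) x * b (n + 1) (x (Fin.last (n + 1))) :=
      (measurable_pathDensity hu₀ hu _).mul ((hb _ le_rfl).comp (measurable_pi_apply _))
    rw [lintegral_pi_fin_succ_snoc μ hmeas,
      ← ih (fun t ht => hb t (by omega)) (fun t ht => hrec t (by omega))]
    refine lintegral_congr fun x => ?_
    simp_rw [pathDensity_snoc, Fin.snoc_last, mul_assoc, mul_comm (u _ _) (b _ _)]
    rw [lintegral_const_mul _ ?_, ← hrec n n.lt_succ_self]
    exact (hb _ le_rfl).mul ((hu _).comp measurable_prodMk_left)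

end BackwardMethod

/-- **Bayesian backward method.**
Let `(E, 𝓔, μ)` be a σ-finite measure space, `T` a time horizon, `u₀` the unnormalized
initial density and `u t` (for `1 ≤ t ≤ T`) the one-step unnormalized transition densities
(transition density times observation likelihood).  The unnormalized posterior on `E^{T+1}` is
`U x = u₀ (x 0) * ∏_{t=1}^T u t (x (t-1), x t)`.  The backward value functions `b t` satisfy
`b T ≡ 1` and `b (t-1) x = ∫ b t y * u t (x, y) μ(dy)`.  Then:
(i) the total mass of `U` equals `∫ b 0 x₀ * u₀ x₀ μ(dx₀)`;
(ii) wherever `0 < b (t-1) (x (t-1)) < ∞` for all `1 ≤ t ≤ T`, `U` admits the forward Markov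
factorization `U x = b 0 (x 0) * u₀ (x 0) * ∏_{t=1}^T b t (x t) * u t (x (t-1), x t) / b (t-1) (x (t-1))`;
(iii) each forward factor is a probability density. -/
theorem bayesian_backward_method
    {E : Type*} [MeasurableSpace E] (μ : Measure E) [SigmaFinite μ] (T : ℕ)
    (u₀ : E → ℝ≥0∞) (hu₀ : Measurable u₀)
    (u : ℕ → E × E → ℝ≥0∞) (hu : ∀ t, Measurable (u t))
    (b : ℕ → E → ℝ≥0∞)
    (hbT : ∀ x, b T x = 1)
    (hbrec : ∀ t, 1 ≤ t → t ≤ T → ∀ x, b (t - 1) x = ∫⁻ y, b t y * u t (x, y) ∂μ) :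
    -- (i)
    ((∫⁻ x : Fin (T + 1) → E,
        u₀ (x 0) * ∏ t ∈ Finset.Icc 1 T, u t (x ↑(t - 1), x ↑t)
        ∂(Measure.pi fun _ : Fin (T + 1) => μ))
      = ∫⁻ x₀, b 0 x₀ * u₀ x₀ ∂μ)
    -- (ii)
    ∧ (∀ x : Fin (T + 1) → E,
        (∀ t, 1 ≤ t → t ≤ T → 0 < b (t - 1) (x ↑(t - 1)) ∧ b (t - 1) (x ↑(t - 1)) < ∞) →
        u₀ (x 0) * ∏ t ∈ Finset.Icc 1 T, u t (x ↑(t - 1), x ↑t)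
          = b 0 (x 0) * u₀ (x 0) *
            ∏ t ∈ Finset.Icc 1 T,
              b t (x ↑t) * u t (x ↑(t - 1), x ↑t) / b (t - 1) (x ↑(t - 1)))
    -- (iii)
    ∧ (∀ t, 1 ≤ t → t ≤ T → ∀ x : E, 0 < b (t - 1) x → b (t - 1) x < ∞ →
        (∫⁻ y, b t y * u t (x, y) / b (t - 1) x ∂μ) = 1) := by
  have hrec : ∀ t < T, ∀ x, b t x = ∫⁻ y, b (t + 1) y * u (t + 1) (x, y) ∂μ :=
    fun t ht x => by simpa using hbrec (t + 1) (by omega) ht x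
  have hb : ∀ t ≤ T, Measurable (b t) := fun t ht =>
    measurable_of_backward_rec hu (by simp only [funext hbT, measurable_const]) hrec ht
  refine ⟨?_, fun x hx => ?_, fun t ht₁ ht₂ x hpos hfin => ?_⟩
  · simpa only [pathDensity, hbT, mul_one] using
      lintegral_pathDensity_mul_backward hu₀ hu hb hrec
  · have hpos t (ht : t < T) := hx (t + 1) (by omega) (by omega)
    simp only [Nat.add_sub_cancel] at hpos
    have htel := ENNReal.mul_prod_Icc_div_telescope (fun t => b t (x t))
      (fun t => u t (x ↑(t - 1), x t)) T (fun t ht => (hpos t ht).1.ne')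
      (fun t ht => (hpos t ht).2.ne)
    rw [Nat.cast_zero, hbT, one_mul] at htel
    rw [mul_comm (b 0 _), mul_assoc, htel]
  · simp only [div_eq_mul_inv]
    rw [lintegral_mul_const' _ _ (ENNReal.inv_ne_top.2 hpos.ne'), ← hbrec t ht₁ ht₂ x,
      ENNReal.mul_inv_cancel hpos.ne' hfin.ne]
end

section
/- (Bayesian forward method.) (i) The total mass of the unnormalized posterior equals the mass of the terminal unnormalized filtering function: ∫_{E^{T+1}} U(x₀,…,x_T) dμ^{⊗(T+1)} = ∫_E π_T(x_T) μ(dx_T). (ii) For every point (x₀,…,x_T) ∈ E^{T+1} such that 0 < π_t(x_t) < ∞ for all 1 ≤ t ≤ T, the unnormalized posterior admits the reverse-time Markov factorization U(x₀,…,x_T) = π_T(x_T) · ∏_{t=1}^{T} [ u_t(x_{t−1},x_t)·π_{t−1}(x_{t−1}) / π_t(x_t) ]. (iii) For every 1 ≤ t ≤ T and every y ∈ E with 0 < π_t(y) < ∞, the reverse-time factor is a probability density: ∫_E u_t(x,y)·π_{t−1}(x) / π_t(y) μ(dx) = 1. -/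
open MeasureTheory ENNReal
open scoped ENNReal BigOperators
open Fin.NatCast

/-!
Integrating the last coordinate out of the path weight `U` against a test function `g` leaves the
weight of the shorter path against `x ↦ ∫ u (x, y) g(y) dy`; Tonelli then moves this kernel from
`g` onto `π`, where it is exactly the forward recursion. Induction on the horizon with `g = 1`
gives (i). Part (ii) is a telescoping product, valid where every `π t (x t)` is nonzero and
finite, and (iii) is the forward recursion divided by `π t y`.
-/

namespace Fin

theorem snoc_natCast_of_le_s1 {α : Type*} {n t : ℕ} (x : Fin (n + 1) → α) (y : α) (ht : t ≤ n) :
    (snoc x y : Fin (n + 2) → α) t = x t := by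
  have hcast : (t : Fin (n + 2)) = castSucc (t : Fin (n + 1)) := by
    ext
    simp [Nat.mod_eq_of_lt (show t < n + 2 by omega), Nat.mod_eq_of_lt (show t < n + 1 by omega)]
  rw [hcast, snoc_castSucc]

theorem snoc_natCast_self {α : Type*} {n : ℕ} (x : Fin (n + 1) → α) (y : α) :
    (snoc x y : Fin (n + 2) → α) (n + 1 : ℕ) = y := by
  rw [natCast_eq_last, snoc_last]

end Fin

namespace MeasureTheory

theorem lintegral_pi_eq_lintegral_lintegral_snoc {E : Type*} [MeasurableSpace E] (μ : Measure E)
    [SigmaFinite μ] {n : ℕ} {f : (Fin (n + 1) → E) → ℝ≥0∞} (hf : Measurable f) :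
    ∫⁻ x, f x ∂Measure.pi (fun _ => μ)
      = ∫⁻ x : Fin n → E, ∫⁻ y, f (Fin.snoc x y) ∂μ ∂Measure.pi (fun _ => μ) := by
  set e := MeasurableEquiv.piFinSuccAbove (fun _ : Fin (n + 1) => E) (Fin.last n)
  rw [← (measurePreserving_piFinSuccAbove (fun _ => μ) (Fin.last n)).symm.lintegral_comp hf,
    lintegral_prod_symm' (fun a => f (e.symm a)) (hf.comp e.symm.measurable)]
  simp [e, Fin.insertNthEquiv, Fin.insertNth_last']

theorem lintegral_mul_lintegral_comm {E : Type*} [MeasurableSpace E] (μ : Measure E)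
    [SFinite μ] {p g : E → ℝ≥0∞} {v : E × E → ℝ≥0∞} (hp : Measurable p) (hv : Measurable v)
    (hg : Measurable g) :
    ∫⁻ z, p z * ∫⁻ y, v (z, y) * g y ∂μ ∂μ = ∫⁻ y, (∫⁻ z, v (z, y) * p z ∂μ) * g y ∂μ := by
  calc ∫⁻ z, p z * ∫⁻ y, v (z, y) * g y ∂μ ∂μ
      = ∫⁻ z, ∫⁻ y, v (z, y) * p z * g y ∂μ ∂μ := by
        refine lintegral_congr fun z => ?_
        rw [← lintegral_const_mul _ (by fun_prop)]
        simp only [mul_left_comm, mul_assoc]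
    _ = ∫⁻ y, ∫⁻ z, v (z, y) * p z * g y ∂μ ∂μ :=
        lintegral_lintegral_swap (by fun_prop)
    _ = ∫⁻ y, (∫⁻ z, v (z, y) * p z ∂μ) * g y ∂μ :=
        lintegral_congr fun y => lintegral_mul_const _ (by fun_prop)

end MeasureTheory

theorem ENNReal.mul_prod_Icc_eq_mul_prod_Icc_mul_div (a b : ℕ → ℝ≥0∞) (n : ℕ)
    (hb : ∀ t, 1 ≤ t → t ≤ n → b t ≠ 0 ∧ b t ≠ ∞) :
    b 0 * ∏ t ∈ Finset.Icc 1 n, a t = b n * ∏ t ∈ Finset.Icc 1 n, a t * b (t - 1) / b t := by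
  induction n with
  | zero => simp
  | succ n ih =>
    obtain ⟨hb0, hbtop⟩ := hb (n + 1) (by omega) le_rfl
    rw [Finset.prod_Icc_succ_top (by omega), Finset.prod_Icc_succ_top (by omega), ← mul_assoc,
      ih fun t h1 h2 => hb t h1 (by omega), Nat.add_sub_cancel,
      mul_div_assoc, mul_left_comm (b (n + 1)), mul_left_comm (b (n + 1)),
      ENNReal.mul_div_cancel hb0 hbtop]
    ring

section PathWeight

variable {E : Type*}

/-- The unnormalized posterior `U` of a path `x₀, …, xₙ`. -/
noncomputable def pathWeight (w₀ : E → ℝ≥0∞) (w : ℕ → E × E → ℝ≥0∞) (n : ℕ)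
    (x : Fin (n + 1) → E) : ℝ≥0∞ :=
  w₀ (x 0) * ∏ t ∈ Finset.Icc 1 n, w t (x ↑(t - 1), x ↑t)

theorem pathWeight_snoc (w₀ : E → ℝ≥0∞) (w : ℕ → E × E → ℝ≥0∞) {n : ℕ} (x : Fin (n + 1) → E)
    (y : E) :
    pathWeight w₀ w (n + 1) (Fin.snoc x y) = pathWeight w₀ w n x * w (n + 1) (x n, y) := by
  have hinit : ∀ t ∈ Finset.Icc 1 n, w t ((Fin.snoc x y : Fin (n + 2) → E) ↑(t - 1),
      (Fin.snoc x y : Fin (n + 2) → E) ↑t) = w t (x ↑(t - 1), x ↑t) := fun t ht => by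
    rw [Finset.mem_Icc] at ht
    rw [Fin.snoc_natCast_of_le_s1 x y (by omega), Fin.snoc_natCast_of_le_s1 x y ht.2]
  rw [pathWeight, pathWeight, Finset.prod_Icc_succ_top (by omega), Finset.prod_congr rfl hinit,
    Nat.add_sub_cancel, Fin.snoc_natCast_of_le_s1 x y le_rfl, Fin.snoc_natCast_self, mul_assoc]
  rfl

variable [MeasurableSpace E]

theorem measurable_pathWeight {w₀ : E → ℝ≥0∞} {w : ℕ → E × E → ℝ≥0∞} (hw₀ : Measurable w₀)
    (hw : ∀ t, Measurable (w t)) (n : ℕ) : Measurable (pathWeight w₀ w n) := by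
  unfold pathWeight
  fun_prop

variable (μ : Measure E)

theorem measurable_of_forward_recursion [SFinite μ] {w : ℕ → E × E → ℝ≥0∞} (hw : ∀ t, Measurable (w t))
    {p : ℕ → E → ℝ≥0∞} {n : ℕ} (hp₀ : Measurable (p 0))
    (hrec : ∀ t, 1 ≤ t → t ≤ n → ∀ y, p t y = ∫⁻ x, w t (x, y) * p (t - 1) x ∂μ) :
    ∀ t ≤ n, Measurable (p t) := by
  intro t
  induction t with
  | zero => exact fun _ => hp₀
  | succ t ih =>
    intro ht
    rw [funext (hrec (t + 1) (by omega) ht)]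
    have := ih (by omega)
    exact Measurable.lintegral_prod_left (by fun_prop)

theorem lintegral_pathWeight_mul [SigmaFinite μ] {w : ℕ → E × E → ℝ≥0∞} (hw : ∀ t, Measurable (w t))
    {p : ℕ → E → ℝ≥0∞} {n : ℕ} (hp : ∀ t ≤ n, Measurable (p t))
    (hrec : ∀ t, 1 ≤ t → t ≤ n → ∀ y, p t y = ∫⁻ x, w t (x, y) * p (t - 1) x ∂μ)
    {g : E → ℝ≥0∞} (hg : Measurable g) :
    ∫⁻ x, pathWeight (p 0) w n x * g (x n) ∂Measure.pi (fun _ => μ) = ∫⁻ y, p n y * g y ∂μ := by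
  induction n generalizing g with
  | zero =>
    rw [← (measurePreserving_funUnique μ (Fin 1)).lintegral_comp
      (show Measurable fun y => p 0 y * g y from (hp 0 le_rfl).mul hg)]
    simp [pathWeight, MeasurableEquiv.funUnique]
    rfl
  | succ n ih =>
    have hpn := hp n (by omega)
    have hwn := hw (n + 1)
    have hweight := measurable_pathWeight (hp 0 (by omega)) hw (n + 1)
    calc ∫⁻ x, pathWeight (p 0) w (n + 1) x * g (x ↑(n + 1)) ∂Measure.pi (fun _ => μ)
        = ∫⁻ x, ∫⁻ y, pathWeight (p 0) w n x * (w (n + 1) (x n, y) * g y) ∂μ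
            ∂Measure.pi (fun _ => μ) := by
          rw [lintegral_pi_eq_lintegral_lintegral_snoc μ (by fun_prop)]
          simp only [pathWeight_snoc, Fin.snoc_natCast_self, mul_assoc]
      _ = ∫⁻ x, pathWeight (p 0) w n x * ∫⁻ y, w (n + 1) (x n, y) * g y ∂μ
            ∂Measure.pi (fun _ => μ) :=
          lintegral_congr fun x => lintegral_const_mul _ (by fun_prop)
      _ = ∫⁻ z, p n z * ∫⁻ y, w (n + 1) (z, y) * g y ∂μ ∂μ :=
          ih (fun t ht => hp t (by omega)) (fun t h1 h2 => hrec t h1 (by omega))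
            (g := fun z => ∫⁻ y, w (n + 1) (z, y) * g y ∂μ)
            (Measurable.lintegral_prod_right (hwn.mul (hg.comp measurable_snd)))
      _ = ∫⁻ y, (∫⁻ z, w (n + 1) (z, y) * p n z ∂μ) * g y ∂μ :=
          lintegral_mul_lintegral_comm μ hpn hwn hg
      _ = ∫⁻ y, p (n + 1) y * g y ∂μ := by
          simp_rw [hrec (n + 1) (by omega) le_rfl, Nat.add_sub_cancel]

end PathWeight

/-- **Bayesian forward method.**
Let `(E, 𝓔, μ)` be a σ-finite measure space, `T` a time horizon, `u₀` the unnormalized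
initial density and `u t` (for `1 ≤ t ≤ T`) the one-step unnormalized transition densities.
The unnormalized posterior on `E^{T+1}` is `U x = u₀ (x 0) * ∏_{t=1}^T u t (x (t-1), x t)`.
The unnormalized filtering functions satisfy `π 0 = u₀` and
`π t y = ∫ u t (x, y) * π (t-1) x μ(dx)`.  Then:
(i) the total mass of `U` equals `∫ π T x_T μ(dx_T)`;
(ii) wherever `0 < π t (x t) < ∞` for all `1 ≤ t ≤ T`, `U` admits the reverse-time Markov
factorization `U x = π T (x T) * ∏_{t=1}^T u t (x (t-1), x t) * π (t-1) (x (t-1)) / π t (x t)`;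
(iii) each reverse-time factor is a probability density. -/
theorem bayesian_forward_method
    {E : Type*} [MeasurableSpace E] (μ : Measure E) [SigmaFinite μ] (T : ℕ)
    (u₀ : E → ℝ≥0∞) (hu₀ : Measurable u₀)
    (u : ℕ → E × E → ℝ≥0∞) (hu : ∀ t, Measurable (u t))
    (π : ℕ → E → ℝ≥0∞)
    (hπ0 : ∀ x, π 0 x = u₀ x)
    (hπrec : ∀ t, 1 ≤ t → t ≤ T → ∀ y, π t y = ∫⁻ x, u t (x, y) * π (t - 1) x ∂μ) :
    -- (i)
    ((∫⁻ x : Fin (T + 1) → E,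
        u₀ (x 0) * ∏ t ∈ Finset.Icc 1 T, u t (x ↑(t - 1), x ↑t)
        ∂(Measure.pi fun _ : Fin (T + 1) => μ))
      = ∫⁻ xT, π T xT ∂μ)
    -- (ii)
    ∧ (∀ x : Fin (T + 1) → E,
        (∀ t, 1 ≤ t → t ≤ T → 0 < π t (x ↑t) ∧ π t (x ↑t) < ∞) →
        u₀ (x 0) * ∏ t ∈ Finset.Icc 1 T, u t (x ↑(t - 1), x ↑t)
          = π T (x ↑T) *
            ∏ t ∈ Finset.Icc 1 T,
              u t (x ↑(t - 1), x ↑t) * π (t - 1) (x ↑(t - 1)) / π t (x ↑t))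
    -- (iii)
    ∧ (∀ t, 1 ≤ t → t ≤ T → ∀ y : E, 0 < π t y → π t y < ∞ →
        (∫⁻ x, u t (x, y) * π (t - 1) x / π t y ∂μ) = 1) := by
  have hπu₀ : π 0 = u₀ := funext hπ0
  have hπ := measurable_of_forward_recursion μ hu (hπu₀ ▸ hu₀) hπrec
  refine ⟨?_, fun x hx => ?_, fun t h1 h2 y hpos hfin => ?_⟩
  · simpa [pathWeight, hπu₀] using
      lintegral_pathWeight_mul μ hu hπ hπrec (g := 1) measurable_const
  · simpa [hπu₀] using ENNReal.mul_prod_Icc_eq_mul_prod_Icc_mul_div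
      (fun t => u t (x ↑(t - 1), x ↑t)) (fun t => π t (x t)) T
      fun t h1 h2 => ⟨(hx t h1 h2).1.ne', (hx t h1 h2).2.ne⟩
  · simp_rw [div_eq_mul_inv]
    rw [lintegral_mul_const' _ _ (ENNReal.inv_ne_top.2 hpos.ne'), ← hπrec t h1 h2 y,
      ENNReal.mul_inv_cancel hpos.ne' hfin.ne]
end

section
/- (The backward representer lower-bounds the state likelihood.) Suppose for each 1 ≤ t ≤ T: (a) for every x, ∫ q_t(x,y) μ(dy) = 1; (b) β_T ≡ 1; (c) for every x, u_t(x,y) > 0 for μ-almost every y in {y : q_t(x,y) > 0}, the function y ↦ q_t(x,y)·log(β_t(y)·u_t(x,y)/q_t(x,y)) (set to 0 where q_t(x,y) = 0) is μ-integrable, and log β_{t−1}(x) = ∫ q_t(x,y)·log(β_t(y)·u_t(x,y)/q_t(x,y)) μ(dy). Then for every 0 ≤ t ≤ T and every x ∈ E, the backward representer is dominated by the Bayesian backward value function: (β_t(x) : [0,∞]) ≤ b_t(x). -/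
open MeasureTheory
open scoped ENNReal

/-! The variational recursion says `log β_{t-1}(x) = ∫ q log (β_t u / q)`, and by concavity of
`log` (Gibbs' inequality, in the elementary form `log s ≤ s - 1`) the right-hand side is at most
`log ∫ β_t u`. Hence `β_{t-1}(x) ≤ ∫ β_t(y) u_t(x,y) dy`, and a downward induction from
`β_T = b_T = 1` through the monotone Bayesian recursion gives `β_t ≤ b_t`. -/

section Gibbs

variable {E : Type*} [MeasurableSpace E] {μ : Measure E}

lemma mul_log_div_le_div_sub_add_mul_log {q h I : ℝ} (hq : 0 < q) (hh : 0 < h) (hI : 0 < I) :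
    q * Real.log (h / q) ≤ h / I - q + q * Real.log I := by
  have hsplit : Real.log (h / q) = Real.log (h / (I * q)) + Real.log I := by
    rw [Real.log_div hh.ne' hq.ne', Real.log_div hh.ne' (by positivity),
      Real.log_mul hI.ne' hq.ne']
    ring
  have hlog : q * Real.log (h / (I * q)) ≤ q * (h / (I * q) - 1) :=
    mul_le_mul_of_nonneg_left (Real.log_le_sub_one_of_pos (by positivity)) hq.le
  have hexpand : q * (h / (I * q) - 1) = h / I - q := by field_simp
  rw [hsplit, mul_add]
  linarith

lemma integral_pos_of_ae_pos_of_integral_ne_zero {q h : E → ℝ} (hq0 : 0 ≤ q)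
    (hq : ∫ y, q y ∂μ ≠ 0) (hh0 : 0 ≤ h) (hh : Integrable h μ)
    (hpos : ∀ᵐ y ∂μ, 0 < q y → 0 < h y) : 0 < ∫ y, h y ∂μ := by
  refine (integral_nonneg hh0).lt_of_ne fun hzero => hq ?_
  have hh_ae : h =ᵐ[μ] 0 := (integral_eq_zero_iff_of_nonneg hh0 hh).mp hzero.symm
  refine integral_eq_zero_of_ae ?_
  filter_upwards [hh_ae, hpos] with y hhy hposy
  by_contra hqy
  exact (hposy ((hq0 y).lt_of_ne' hqy)).ne' hhy

theorem integral_mul_log_div_le_log_integral {q h : E → ℝ} (hq0 : 0 ≤ q)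
    (hq1 : ∫ y, q y ∂μ = 1) (hh0 : 0 ≤ h) (hh : Integrable h μ)
    (hpos : ∀ᵐ y ∂μ, 0 < q y → 0 < h y)
    (hint : Integrable (fun y => if q y = 0 then 0 else q y * Real.log (h y / q y)) μ) :
    ∫ y, (if q y = 0 then 0 else q y * Real.log (h y / q y)) ∂μ ≤ Real.log (∫ y, h y ∂μ) := by
  set I := ∫ y, h y ∂μ
  have hq : Integrable q μ := Integrable.of_integral_ne_zero (by simp [hq1])
  have hI : 0 < I := integral_pos_of_ae_pos_of_integral_ne_zero hq0 (by simp [hq1]) hh0 hh hpos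
  have hpt : ∀ᵐ y ∂μ, (if q y = 0 then 0 else q y * Real.log (h y / q y))
      ≤ h y / I - q y + q y * Real.log I := by
    filter_upwards [hpos] with y hy
    split_ifs with hqy
    · simpa [hqy] using div_nonneg (hh0 y) hI.le
    · have hqy' : 0 < q y := (hq0 y).lt_of_ne' hqy
      exact mul_log_div_le_div_sub_add_mul_log hqy' (hy hqy') hI
  have hA : Integrable (fun y => h y / I - q y) μ := (hh.div_const I).sub hq
  have hB : Integrable (fun y => q y * Real.log I) μ := hq.mul_const _
  calc _ ≤ ∫ y, (h y / I - q y + q y * Real.log I) ∂μ := integral_mono_ae hint (hA.add hB) hpt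
    _ = Real.log I := by
        rw [integral_add hA hB,
          integral_sub (hh.div_const I) hq, integral_div, integral_mul_const, hq1]
        field_simp
        ring

theorem ofReal_le_lintegral_of_log_le_integral_mul_log_div {q h : E → ℝ} {c : ℝ} (hc : 0 < c)
    (hq0 : 0 ≤ q) (hq1 : ∫ y, q y ∂μ = 1) (hh0 : 0 ≤ h) (hhm : AEStronglyMeasurable h μ)
    (hpos : ∀ᵐ y ∂μ, 0 < q y → 0 < h y)
    (hint : Integrable (fun y => if q y = 0 then 0 else q y * Real.log (h y / q y)) μ)
    (hlog : Real.log c ≤ ∫ y, (if q y = 0 then 0 else q y * Real.log (h y / q y)) ∂μ) :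
    ENNReal.ofReal c ≤ ∫⁻ y, ENNReal.ofReal (h y) ∂μ := by
  rcases eq_or_ne (∫⁻ y, ENNReal.ofReal (h y) ∂μ) ∞ with htop | htop
  · simp [htop]
  have hh : Integrable h μ :=
    ⟨hhm, (hasFiniteIntegral_iff_ofReal (.of_forall hh0)).mpr htop.lt_top⟩
  have hI : 0 < ∫ y, h y ∂μ :=
    integral_pos_of_ae_pos_of_integral_ne_zero hq0 (by simp [hq1]) hh0 hh hpos
  have hcI : c ≤ ∫ y, h y ∂μ :=
    (Real.log_le_log_iff hc hI).mp
      (hlog.trans (integral_mul_log_div_le_log_integral hq0 hq1 hh0 hh hpos hint))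
  rw [← ofReal_integral_eq_lintegral_ofReal hh (.of_forall hh0)]
  exact ENNReal.ofReal_le_ofReal hcI

end Gibbs

theorem backward_representer_le_state_likelihood_general
    {E : Type*} [MeasurableSpace E] (μ : Measure E) (T : ℕ)
    (u : ℕ → E × E → ℝ) (hum : ∀ t, Measurable (u t)) (hu0 : ∀ t p, 0 ≤ u t p)
    (q : ℕ → E × E → ℝ) (hq0 : ∀ t p, 0 ≤ q t p)
    (β : ℕ → E → ℝ) (hβm : ∀ t, Measurable (β t)) (hβpos : ∀ t x, 0 < β t x)
    (b : ℕ → E → ℝ≥0∞)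
    (hbT : ∀ x, b T x = 1)
    (hbrec : ∀ t, 1 ≤ t → t ≤ T → ∀ x,
      b (t - 1) x = ∫⁻ y, b t y * ENNReal.ofReal (u t (x, y)) ∂μ)
    -- (a): each `q t (x, ·)` is a probability density
    (ha : ∀ t, 1 ≤ t → t ≤ T → ∀ x, (∫ y, q t (x, y) ∂μ) = 1)
    -- (b): terminal condition of the representer
    (hβT : ∀ x, β T x = 1)
    -- (c): positivity, integrability, and the variational backward value recursion
    (hc₁ : ∀ t, 1 ≤ t → t ≤ T → ∀ x,
      ∀ᵐ y ∂μ, 0 < q t (x, y) → 0 < u t (x, y))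
    (hc₂ : ∀ t, 1 ≤ t → t ≤ T → ∀ x,
      Integrable (fun y => if q t (x, y) = 0 then 0
        else q t (x, y) * Real.log (β t y * u t (x, y) / q t (x, y))) μ)
    (hc₃ : ∀ t, 1 ≤ t → t ≤ T → ∀ x,
      Real.log (β (t - 1) x) = ∫ y,
        (if q t (x, y) = 0 then 0
         else q t (x, y) * Real.log (β t y * u t (x, y) / q t (x, y))) ∂μ) :
    ∀ t, t ≤ T → ∀ x : E, ENNReal.ofReal (β t x) ≤ b t x := by
  intro t ht
  induction ht using Nat.decreasingInduction with
  | self => simp [hβT, hbT]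
  | of_succ k hk ih =>
    intro x
    have h1 : 1 ≤ k + 1 := k.succ_pos
    have hone_step : ENNReal.ofReal (β k x)
        ≤ ∫⁻ y, ENNReal.ofReal (β (k + 1) y * u (k + 1) (x, y)) ∂μ := by
      refine ofReal_le_lintegral_of_log_le_integral_mul_log_div (hβpos k x)
        (fun y => hq0 _ _) (ha _ h1 hk x) (fun y => mul_nonneg (hβpos _ y).le (hu0 _ _))
        ((hβm _).mul ((hum _).comp measurable_prodMk_left)).aestronglyMeasurable ?_
        (hc₂ _ h1 hk x) (hc₃ _ h1 hk x).le
      filter_upwards [hc₁ _ h1 hk x] with y hy hqy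
      exact mul_pos (hβpos _ y) (hy hqy)
    calc ENNReal.ofReal (β k x) ≤ _ := hone_step
      _ ≤ ∫⁻ y, b (k + 1) y * ENNReal.ofReal (u (k + 1) (x, y)) ∂μ := by
        gcongr with y
        rw [ENNReal.ofReal_mul (hβpos _ y).le]
        exact mul_le_mul_left (ih y) _
      _ = b k x := (hbrec _ h1 hk x).symm

/-- **The backward representer lower-bounds the state likelihood.**
With `u t` the one-step unnormalized transition densities, `q t` variational forward
transition kernel densities (probability densities in the second argument), `β t` the
positive backward value representers satisfying `β T ≡ 1` and the variational backward
value recursion, and `b t` the Bayesian backward value functions (`b T ≡ 1`,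
`b (t-1) x = ∫ b t y * u t (x,y) μ(dy)`), one has `β t x ≤ b t x` for all `0 ≤ t ≤ T`
and all `x`. -/
theorem backward_representer_le_state_likelihood
    {E : Type*} [MeasurableSpace E] (μ : Measure E) [SigmaFinite μ] (T : ℕ)
    (u : ℕ → E × E → ℝ) (hum : ∀ t, Measurable (u t)) (hu0 : ∀ t p, 0 ≤ u t p)
    (q : ℕ → E × E → ℝ) (hqm : ∀ t, Measurable (q t)) (hq0 : ∀ t p, 0 ≤ q t p)
    (β : ℕ → E → ℝ) (hβm : ∀ t, Measurable (β t)) (hβpos : ∀ t x, 0 < β t x)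
    (b : ℕ → E → ℝ≥0∞)
    (hbT : ∀ x, b T x = 1)
    (hbrec : ∀ t, 1 ≤ t → t ≤ T → ∀ x,
      b (t - 1) x = ∫⁻ y, b t y * ENNReal.ofReal (u t (x, y)) ∂μ)
    -- (a): each `q t (x, ·)` is a probability density
    (ha : ∀ t, 1 ≤ t → t ≤ T → ∀ x, (∫ y, q t (x, y) ∂μ) = 1)
    -- (b): terminal condition of the representer
    (hβT : ∀ x, β T x = 1)
    -- (c): positivity, integrability, and the variational backward value recursion
    (hc₁ : ∀ t, 1 ≤ t → t ≤ T → ∀ x,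
      ∀ᵐ y ∂μ, 0 < q t (x, y) → 0 < u t (x, y))
    (hc₂ : ∀ t, 1 ≤ t → t ≤ T → ∀ x,
      Integrable (fun y => if q t (x, y) = 0 then 0
        else q t (x, y) * Real.log (β t y * u t (x, y) / q t (x, y))) μ)
    (hc₃ : ∀ t, 1 ≤ t → t ≤ T → ∀ x,
      Real.log (β (t - 1) x) = ∫ y,
        (if q t (x, y) = 0 then 0
         else q t (x, y) * Real.log (β t y * u t (x, y) / q t (x, y))) ∂μ) :
    ∀ t, t ≤ T → ∀ x : E, ENNReal.ofReal (β t x) ≤ b t x :=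
  backward_representer_le_state_likelihood_general μ T u hum hu0 q hq0 β hβm hβpos b hbT hbrec ha
    hβT hc₁ hc₂ hc₃
end

section
/- (The predictive forward representer lower-bounds the unnormalized predictive density.) Fix y ∈ E and suppose: (a) ∫ q(y,x) μ(dx) = 1; (b) α(x) ≤ π(x) for all x ∈ E; (c) ρ(x,y)·α(x) > 0 for μ-almost every x in the set {x : q(y,x) > 0}; (d) the function x ↦ q(y,x)·log(ρ(x,y)·α(x)/q(y,x)) (set to 0 where q(y,x) = 0) is μ-integrable, and log a(y) = ∫ q(y,x)·log(ρ(x,y)·α(x)/q(y,x)) μ(dx); (e) the function x ↦ ρ(x,y)·π(x) is μ-integrable. Then a(y) ≤ ∫ ρ(x,y)·π(x) μ(dx), i.e., the predictive representer value is dominated by the one-step prediction of π. -/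
open MeasureTheory

/-!
The map `x ↦ q (y, x)` is a probability density, so by Jensen's inequality (here in the form
`log t ≤ t - 1`) the variational bound `log (a y) = ∫ q log (ρ α / q)` is at most
`log ∫ ρ α`; and `∫ ρ α ≤ ∫ ρ π` because `α ≤ π`.
-/

section Gibbs

open Real

/-- Writing `g log (f / g) = g log (f / (c g)) + g log c`, this is `log t ≤ t - 1` at
`t = f / (c g)`. -/
lemma mul_log_div_le_div_sub_add_mul_log_s5 {f g c : ℝ} (hf : 0 ≤ f) (hg : 0 ≤ g) (hc : 0 < c)
    (hfg : 0 < g → 0 < f) : g * log (f / g) ≤ f / c - g + g * log c := by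
  rcases hg.eq_or_lt with rfl | hg
  · simpa using div_nonneg hf hc.le
  have hf_pos := hfg hg
  have hsplit : log (f / g) = log (f / (c * g)) + log c := by
    rw [← log_mul (by positivity) hc.ne']
    field_simp
  have hle : g * log (f / (c * g)) ≤ g * (f / (c * g) - 1) :=
    mul_le_mul_of_nonneg_left (log_le_sub_one_of_pos (by positivity)) hg.le
  have hid : g * (f / (c * g)) = f / c := by field_simp
  rw [hsplit]
  linarith

variable {E : Type*} [MeasurableSpace E] {μ : Measure E} {f g : E → ℝ}

lemma integral_pos_of_ae_pos_imp_pos (hf0 : 0 ≤ f) (hf : Integrable f μ) (hg0 : 0 ≤ g)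
    (hg : ∫ x, g x ∂μ ≠ 0) (hfg : ∀ᵐ x ∂μ, 0 < g x → 0 < f x) : 0 < ∫ x, f x ∂μ := by
  refine (integral_nonneg hf0).lt_of_ne fun hzero => hg ?_
  have hf_ae : f =ᵐ[μ] 0 := (integral_eq_zero_iff_of_nonneg hf0 hf).1 hzero.symm
  refine integral_eq_zero_of_ae ?_
  filter_upwards [hf_ae, hfg] with x hfx hfgx
  by_contra hgx
  exact (hfgx ((hg0 x).lt_of_ne' hgx)).ne' hfx

theorem integral_mul_log_div_le_log_integral_s5 (hf0 : 0 ≤ f) (hf : Integrable f μ) (hg0 : 0 ≤ g)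
    (hg : ∫ x, g x ∂μ = 1) (hfg : ∀ᵐ x ∂μ, 0 < g x → 0 < f x)
    (hint : Integrable (fun x => g x * log (f x / g x)) μ) :
    ∫ x, g x * log (f x / g x) ∂μ ≤ log (∫ x, f x ∂μ) := by
  set c := ∫ x, f x ∂μ
  have hc : 0 < c := integral_pos_of_ae_pos_imp_pos hf0 hf hg0 (by simp [hg]) hfg
  have hg_int : Integrable g μ := by
    by_contra h
    simp [integral_undef h] at hg
  have hsub_int : Integrable (fun x => f x / c - g x) μ := (hf.div_const c).sub hg_int
  have hbound_int : Integrable (fun x => f x / c - g x + g x * log c) μ :=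
    hsub_int.add (hg_int.mul_const _)
  calc ∫ x, g x * log (f x / g x) ∂μ
      ≤ ∫ x, f x / c - g x + g x * log c ∂μ := by
        refine integral_mono_ae hint hbound_int ?_
        filter_upwards [hfg] with x hfgx
        exact mul_log_div_le_div_sub_add_mul_log_s5 (hf0 x) (hg0 x) hc hfgx
    _ = log c := by
        rw [integral_add hsub_int (hg_int.mul_const _),
          integral_sub (hf.div_const c) hg_int, integral_div, integral_mul_const, hg,
          div_self hc.ne']
        ring

end Gibbs

theorem predictive_representer_le_predictive_density_general
    {E : Type*} [MeasurableSpace E] (μ : Measure E)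
    (ρ : E × E → ℝ) (hρm : Measurable ρ) (hρ0 : ∀ p, 0 ≤ ρ p)
    (α : E → ℝ) (hαm : Measurable α) (hα0 : ∀ x, 0 ≤ α x)
    (π : E → ℝ)
    (q : E × E → ℝ) (hq0 : ∀ p, 0 ≤ q p)
    (a : E → ℝ)
    (y : E)
    (ha : (∫ x, q (y, x) ∂μ) = 1)
    (hb : ∀ x, α x ≤ π x)
    (hc : ∀ᵐ x ∂μ, 0 < q (y, x) → 0 < ρ (x, y) * α x)
    (hd₁ : Integrable
      (fun x => if q (y, x) = 0 then 0
                else q (y, x) * Real.log (ρ (x, y) * α x / q (y, x))) μ)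
    (hd₂ : Real.log (a y) = ∫ x,
      (if q (y, x) = 0 then 0
       else q (y, x) * Real.log (ρ (x, y) * α x / q (y, x))) ∂μ)
    (he : Integrable (fun x => ρ (x, y) * π x) μ) :
    a y ≤ ∫ x, ρ (x, y) * π x ∂μ := by
  have hf0 : ∀ x, 0 ≤ ρ (x, y) * α x := fun x => mul_nonneg (hρ0 _) (hα0 x)
  have hle : ∀ x, ρ (x, y) * α x ≤ ρ (x, y) * π x := fun x =>
    mul_le_mul_of_nonneg_left (hb x) (hρ0 _)
  have hf : Integrable (fun x => ρ (x, y) * α x) μ :=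
    he.mono' (by fun_prop) (.of_forall fun x => by
      rw [Real.norm_of_nonneg (hf0 x)]; exact hle x)
  -- The case split only guards `0 * log _`, which is `0` anyway.
  have hite : (fun x => if q (y, x) = 0 then 0
      else q (y, x) * Real.log (ρ (x, y) * α x / q (y, x))) =
      fun x => q (y, x) * Real.log (ρ (x, y) * α x / q (y, x)) := by
    ext x; split_ifs with h <;> simp [h]
  rw [hite] at hd₁ hd₂
  have hpos := integral_pos_of_ae_pos_imp_pos hf0 hf (fun x => hq0 _) (by simp [ha]) hc
  calc a y ≤ Real.exp (Real.log (a y)) := Real.le_exp_log _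
    _ ≤ Real.exp (Real.log (∫ x, ρ (x, y) * α x ∂μ)) := Real.exp_le_exp.2 <| hd₂ ▸
        integral_mul_log_div_le_log_integral_s5 hf0 hf (fun x => hq0 _) ha hc hd₁
    _ = ∫ x, ρ (x, y) * α x ∂μ := Real.exp_log hpos
    _ ≤ ∫ x, ρ (x, y) * π x ∂μ := integral_mono hf he hle

/-- **The predictive forward representer lower-bounds the unnormalized predictive density.**
Let `ρ (x, y)` be the state transition density, `α` the (positive) forward value representer
at the previous time, `π` the unnormalized Bayesian filtering density at the previous time,
`q` a variational reverse-time kernel and `a` the (positive) predictive forward value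
representer.  Fix `y ∈ E` and assume: (a) `∫ q (y, x) μ(dx) = 1`; (b) `α ≤ π`;
(c) `ρ (x,y) * α x > 0` for μ-a.e. `x` with `q (y,x) > 0`; (d) the Jensen integrand is
μ-integrable and `log (a y) = ∫ q (y,x) * log (ρ (x,y) * α x / q (y,x)) μ(dx)`;
(e) `x ↦ ρ (x,y) * π x` is μ-integrable.  Then `a y ≤ ∫ ρ (x,y) * π x μ(dx)`. -/
theorem predictive_representer_le_predictive_density
    {E : Type*} [MeasurableSpace E] (μ : Measure E) [SigmaFinite μ]
    (ρ : E × E → ℝ) (hρm : Measurable ρ) (hρ0 : ∀ p, 0 ≤ ρ p)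
    (α : E → ℝ) (hαm : Measurable α) (hα0 : ∀ x, 0 ≤ α x) (hαpos : ∀ x, 0 < α x)
    (π : E → ℝ) (hπm : Measurable π) (hπ0 : ∀ x, 0 ≤ π x)
    (q : E × E → ℝ) (hqm : Measurable q) (hq0 : ∀ p, 0 ≤ q p)
    (a : E → ℝ) (hapos : ∀ y, 0 < a y)
    (y : E)
    (ha : (∫ x, q (y, x) ∂μ) = 1)
    (hb : ∀ x, α x ≤ π x)
    (hc : ∀ᵐ x ∂μ, 0 < q (y, x) → 0 < ρ (x, y) * α x)
    (hd₁ : Integrable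
      (fun x => if q (y, x) = 0 then 0
                else q (y, x) * Real.log (ρ (x, y) * α x / q (y, x))) μ)
    (hd₂ : Real.log (a y) = ∫ x,
      (if q (y, x) = 0 then 0
       else q (y, x) * Real.log (ρ (x, y) * α x / q (y, x))) ∂μ)
    (he : Integrable (fun x => ρ (x, y) * π x) μ) :
    a y ≤ ∫ x, ρ (x, y) * π x ∂μ :=
  predictive_representer_le_predictive_density_general μ ρ hρm hρ0 α hαm hα0 π q hq0 a y ha hb hc
    hd₁ hd₂ he
end

section
/- (Recursive optimal variational filtering: the Bayes-optimal reverse kernel attains the value functional recursion with equality.) Fix y ∈ E and suppose: (a) ∫ q†(y,x) μ(dx) = 1; (b) α†(y) > 0; (c) the Bayes identity α†(y)·q†(y,x) = ρ(x,y)·α(x) holds for all x ∈ E. Then the function x ↦ q†(y,x)·log(ρ(x,y)·α(x)/q†(y,x)) (set to 0 where q†(y,x) = 0) is μ-integrable and ∫ q†(y,x)·log(ρ(x,y)·α(x)/q†(y,x)) μ(dx) = log α†(y). Consequently, for any measurable h : E → ℝ with h(y) > 0 (the observation likelihood), ∫ q†(y,x)·log(h(y)·ρ(x,y)·α(x)/q†(y,x))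 μ(dx) = log( h(y)·α†(y) ), i.e., the forward value functional recursion reduces to log α_new(y) = log h(y) + log α†(y). -/
open MeasureTheory

/-- **Recursive optimal variational filtering.**
Let `ρ` be the state transition density, `α` the (nonnegative) forward value representer at
the previous time, `α†` the universally optimal predictive value representer and `q†` the
Bayes-optimal reverse-time kernel.  Fix `y ∈ E` and assume: (a) `∫ q† (y,x) μ(dx) = 1`;
(b) `α† y > 0`; (c) the Bayes identity `α† y * q† (y,x) = ρ (x,y) * α x` for all `x`.
Then the Jensen integrand `x ↦ q† (y,x) * log (ρ (x,y) * α x / q† (y,x))` (set to `0` where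
`q† (y,x) = 0`) is μ-integrable with integral `log (α† y)`, and for any measurable
observation likelihood `h` with `h y > 0` the forward value functional recursion reduces to
`∫ q† (y,x) * log (h y * ρ (x,y) * α x / q† (y,x)) μ(dx) = log (h y * α† y)`. -/
theorem recursive_optimal_variational_filtering
    {E : Type*} [MeasurableSpace E] (μ : Measure E) [SigmaFinite μ]
    (ρ : E × E → ℝ) (hρm : Measurable ρ) (hρ0 : ∀ p, 0 ≤ ρ p)
    (α : E → ℝ) (hαm : Measurable α) (hα0 : ∀ x, 0 ≤ α x)
    (αd : E → ℝ) (hαdm : Measurable αd)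
    (qd : E × E → ℝ) (hqdm : Measurable qd) (hqd0 : ∀ p, 0 ≤ qd p)
    (y : E)
    (ha : (∫ x, qd (y, x) ∂μ) = 1)
    (hb : 0 < αd y)
    (hc : ∀ x, αd y * qd (y, x) = ρ (x, y) * α x) :
    Integrable
      (fun x => if qd (y, x) = 0 then 0
                else qd (y, x) * Real.log (ρ (x, y) * α x / qd (y, x))) μ
    ∧ (∫ x, (if qd (y, x) = 0 then 0
             else qd (y, x) * Real.log (ρ (x, y) * α x / qd (y, x))) ∂μ)
        = Real.log (αd y)
    ∧ ∀ h : E → ℝ, Measurable h → 0 < h y →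
        (∫ x, (if qd (y, x) = 0 then 0
               else qd (y, x) * Real.log (h y * ρ (x, y) * α x / qd (y, x))) ∂μ)
          = Real.log (h y * αd y) := by
  have hq : Integrable (fun x => qd (y, x)) μ := by
    by_contra hni
    rw [integral_undef hni] at ha
    exact one_ne_zero ha.symm
  -- pointwise: ρ (x,y) * α x / qd (y,x) = αd y when qd (y,x) ≠ 0
  have key : ∀ c : ℝ, (fun x => if qd (y, x) = 0 then 0
      else qd (y, x) * Real.log (c * (ρ (x, y) * α x) / qd (y, x)))
      = fun x => qd (y, x) * Real.log (c * αd y) := by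
    intro c
    funext x
    by_cases h0 : qd (y, x) = 0
    · simp [h0]
    · have : ρ (x, y) * α x / qd (y, x) = αd y := by
        field_simp
        linarith [hc x]
      rw [if_neg h0, mul_div_assoc, this]
  have key1 : (fun x => if qd (y, x) = 0 then 0
      else qd (y, x) * Real.log (ρ (x, y) * α x / qd (y, x)))
      = fun x => qd (y, x) * Real.log (αd y) := by
    have := key 1
    simpa using this
  refine ⟨?_, ?_, ?_⟩
  · rw [key1]
    exact hq.mul_const _
  · rw [key1, integral_mul_const, ha, one_mul]
  · intro h hm hy
    have : (fun x => if qd (y, x) = 0 then 0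
        else qd (y, x) * Real.log (h y * ρ (x, y) * α x / qd (y, x)))
        = fun x => qd (y, x) * Real.log (h y * αd y) := by
      have := key (h y)
      simpa [mul_assoc] using this
    rw [this, integral_mul_const, ha, one_mul]
end

section
/- (Average of log-Gaussian densities.) The matrix P := ∑_{z} f(z)·Σ(z)⁻¹ is positive definite; set Σ̄ := P⁻¹, m̄ := Σ̄ · ( ∑_{z} f(z)·Σ(z)⁻¹·m(z) ), and log ζ := ∑_{z} f(z)·log g(m̄ | z) + (1/2)·log det(2π·Σ̄). Then for every x ∈ ℝ^d, ∑_{z} f(z)·log g(x | z) = log ζ + log ḡ(x), where ḡ is the Gaussian density with mean m̄ and covariance Σ̄. -/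
/-!
Up to its normalizing constant, `log g(x | z)` is `-1/2` times the quadratic form of `Σ(z)⁻¹`
centred at `m(z)`. Since `m̄` solves `P m̄ = ∑ f(z) Σ(z)⁻¹ m(z)`, completing the square turns the
`f`-weighted sum of these forms into the quadratic form of `P = Σ̄⁻¹` centred at `m̄` plus its value
at `m̄`, and the remaining constants add up to `log ζ`. `P` is positive definite because it is a
nonnegative combination of positive definite matrices with at least one positive weight.
-/

open MeasureTheory Matrix
open scoped BigOperators

/-- The Gaussian density on `ℝ^d` with mean `m` and (positive definite) covariance `S`:
`g(x) = det(2π·S)^{-1/2} · exp(−(1/2)·(x−m)ᵀ S⁻¹ (x−m))`. -/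
noncomputable def gaussianDensity {d : ℕ} (m : Fin d → ℝ)
    (S : Matrix (Fin d) (Fin d) ℝ) (x : Fin d → ℝ) : ℝ :=
  ((2 * Real.pi) • S).det ^ (-(1 : ℝ) / 2) *
    Real.exp (-(1 / 2) * ((x - m) ⬝ᵥ S⁻¹.mulVec (x - m)))


namespace Matrix

variable {n ι : Type*} [Fintype ι]

theorem posDef_sum_smul_of_pos {w : ι → ℝ} {A : ι → Matrix n n ℝ} (hw : ∀ i, 0 ≤ w i)
    {i₀ : ι} (hi₀ : 0 < w i₀) (hA : ∀ i, (A i).PosDef) : (∑ i, w i • A i).PosDef := by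
  classical
  rw [← Finset.add_sum_erase _ _ (Finset.mem_univ i₀)]
  exact ((hA i₀).smul hi₀).add_posSemidef
    (posSemidef_sum _ fun i _ => (hA i).posSemidef.smul (hw i))

variable [Fintype n] {R : Type*} [CommRing R]

theorem IsSymm.dotProduct_mulVec_comm {Q : Matrix n n R} (hQ : Q.IsSymm) (u v : n → R) :
    v ⬝ᵥ Q *ᵥ u = u ⬝ᵥ Q *ᵥ v := by
  rw [dotProduct_mulVec, ← mulVec_transpose, hQ, dotProduct_comm]

theorem IsSymm.add_dotProduct_mulVec_add {Q : Matrix n n R} (hQ : Q.IsSymm) (u v : n → R) :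
    (u + v) ⬝ᵥ Q *ᵥ (u + v) = u ⬝ᵥ Q *ᵥ u + 2 * (u ⬝ᵥ Q *ᵥ v) + v ⬝ᵥ Q *ᵥ v := by
  rw [mulVec_add, dotProduct_add, add_dotProduct, add_dotProduct, hQ.dotProduct_mulVec_comm u v]
  ring

theorem sum_mul_dotProduct_mulVec (w : ι → R) (Q : ι → Matrix n n R) (u v : n → R) :
    ∑ i, w i * (u ⬝ᵥ Q i *ᵥ v) = u ⬝ᵥ (∑ i, w i • Q i) *ᵥ v := by
  simp [sum_mulVec, dotProduct_sum, smul_mulVec]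

/-- Completing the square around any `c` solving the normal equation `hc`: the cross terms
cancel. -/
theorem sum_mul_sub_dotProduct_mulVec_sub {w : ι → R} {Q : ι → Matrix n n R}
    (hQ : ∀ i, (Q i).IsSymm) {μ : ι → n → R} {c : n → R}
    (hc : (∑ i, w i • Q i) *ᵥ c = ∑ i, w i • Q i *ᵥ μ i) (x : n → R) :
    ∑ i, w i * ((x - μ i) ⬝ᵥ Q i *ᵥ (x - μ i)) =
      (x - c) ⬝ᵥ (∑ i, w i • Q i) *ᵥ (x - c) + ∑ i, w i * ((c - μ i) ⬝ᵥ Q i *ᵥ (c - μ i)) := by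
  have hcross : ∑ i, w i * ((x - c) ⬝ᵥ Q i *ᵥ (c - μ i)) = 0 := by
    simp [mulVec_sub, dotProduct_sub, mul_sub, Finset.sum_sub_distrib, sum_mul_dotProduct_mulVec,
      hc, dotProduct_sum]
  have hsplit : ∀ i, x - μ i = (x - c) + (c - μ i) := fun i => by abel
  simp only [hsplit, (hQ _).add_dotProduct_mulVec_add, mul_add, Finset.sum_add_distrib,
    sum_mul_dotProduct_mulVec, mul_left_comm (w _) 2, ← Finset.mul_sum, hcross, mul_zero, add_zero]

end Matrix

theorem log_gaussianDensity {d : ℕ} {S : Matrix (Fin d) (Fin d) ℝ} (hS : S.PosDef)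
    (m x : Fin d → ℝ) :
    Real.log (gaussianDensity m S x) =
      -(1 / 2) * Real.log ((2 * Real.pi) • S).det - 1 / 2 * ((x - m) ⬝ᵥ S⁻¹ *ᵥ (x - m)) := by
  have hdet : 0 < ((2 * Real.pi) • S).det := by
    rw [det_smul]
    exact mul_pos (pow_pos (by positivity) _) hS.det_pos
  rw [gaussianDensity, Real.log_mul (Real.rpow_pos_of_pos hdet _).ne' (Real.exp_ne_zero _),
    Real.log_rpow hdet, Real.log_exp]
  ring

theorem sum_mul_log_gaussianDensity {d M : ℕ} (f : Fin M → ℝ) (m : Fin M → Fin d → ℝ)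
    {S : Fin M → Matrix (Fin d) (Fin d) ℝ} (hS : ∀ z, (S z).PosDef) (x : Fin d → ℝ) :
    ∑ z, f z * Real.log (gaussianDensity (m z) (S z) x) =
      -(1 / 2) * ∑ z, f z * Real.log ((2 * Real.pi) • S z).det
        - 1 / 2 * ∑ z, f z * ((x - m z) ⬝ᵥ (S z)⁻¹ *ᵥ (x - m z)) := by
  simp only [log_gaussianDensity (hS _), Finset.mul_sum, ← Finset.sum_sub_distrib]
  exact Finset.sum_congr rfl fun z _ => by ring

theorem average_log_gaussian_general
    (d M : ℕ)
    (f : Fin M → ℝ) (hf0 : ∀ z, 0 ≤ f z) (hf1 : (∑ z, f z) = 1)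
    (m : Fin M → Fin d → ℝ)
    (S : Fin M → Matrix (Fin d) (Fin d) ℝ) (hS : ∀ z, (S z).PosDef) :
    let P : Matrix (Fin d) (Fin d) ℝ := ∑ z, f z • (S z)⁻¹
    let Sbar := P⁻¹
    let mbar := Sbar.mulVec (∑ z, f z • (S z)⁻¹.mulVec (m z))
    let logζ := (∑ z, f z * Real.log (gaussianDensity (m z) (S z) mbar))
      + (1 / 2) * Real.log (((2 * Real.pi) • Sbar).det)
    P.PosDef ∧
      ∀ x : Fin d → ℝ,
        (∑ z, f z * Real.log (gaussianDensity (m z) (S z) x))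
          = logζ + Real.log (gaussianDensity mbar Sbar x) := by
  intro P Sbar mbar logζ
  obtain ⟨z₀, -, hz₀⟩ := Finset.exists_lt_of_sum_lt (s := Finset.univ) (f := 0) (g := f)
    (by simp [hf1])
  have hP : P.PosDef := posDef_sum_smul_of_pos hf0 hz₀ fun z => (hS z).inv
  have hPdet : IsUnit P.det := (isUnit_iff_isUnit_det P).1 hP.isUnit
  have hmbar : P *ᵥ mbar = ∑ z, f z • (S z)⁻¹ *ᵥ m z := by
    rw [mulVec_mulVec, mul_nonsing_inv P hPdet, one_mulVec]
  refine ⟨hP, fun x => ?_⟩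
  simp only [logζ, sum_mul_log_gaussianDensity f m hS]
  rw [log_gaussianDensity hP.inv, nonsing_inv_nonsing_inv P hPdet,
    sum_mul_sub_dotProduct_mulVec_sub (Q := fun z => (S z)⁻¹) (fun z => (hS z).inv.isHermitian)
      hmbar]
  ring

/-- **Average of log-Gaussian densities.**
Given a probability vector `f` over `Fin M` and Gaussian parameters `(m z, Σ z)` with each
`Σ z` positive definite, the matrix `P := ∑ z, f z • (Σ z)⁻¹` is positive definite; with
`Σ̄ := P⁻¹`, `m̄ := Σ̄ · (∑ z, f z • (Σ z)⁻¹ m z)` and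
`log ζ := ∑ z, f z · log g(m̄ | z) + (1/2)·log det(2π·Σ̄)`, one has for every `x`
`∑ z, f z · log g(x | z) = log ζ + log ḡ(x)` where `ḡ` is the Gaussian density with
mean `m̄` and covariance `Σ̄`. -/
theorem average_log_gaussian
    (d M : ℕ) (hM : 1 ≤ M)
    (f : Fin M → ℝ) (hf0 : ∀ z, 0 ≤ f z) (hf1 : (∑ z, f z) = 1)
    (m : Fin M → Fin d → ℝ)
    (S : Fin M → Matrix (Fin d) (Fin d) ℝ) (hS : ∀ z, (S z).PosDef) :
    let P : Matrix (Fin d) (Fin d) ℝ := ∑ z, f z • (S z)⁻¹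
    let Sbar := P⁻¹
    let mbar := Sbar.mulVec (∑ z, f z • (S z)⁻¹.mulVec (m z))
    let logζ := (∑ z, f z * Real.log (gaussianDensity (m z) (S z) mbar))
      + (1 / 2) * Real.log (((2 * Real.pi) • Sbar).det)
    P.PosDef ∧
      ∀ x : Fin d → ℝ,
        (∑ z, f z * Real.log (gaussianDensity (m z) (S z) x))
          = logζ + Real.log (gaussianDensity mbar Sbar x) :=
  average_log_gaussian_general d M f hf0 hf1 m S hS
end
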